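/- arXiv:1501.00293 — 6 statements merged into one kernel-verified Lean document; each statement's English description precedes it below -/
import Mathlib

section
/- Let (X_n)_{n≥0} be a uniformly bounded sequence of real random variables converging almost surely to X, and let (ℱ_n)_{n≥0} be a decreasing sequence of sub-σ-fields of 𝒜. Then E[X_n | ℱ_n] converges almost surely to E[X | ⋂_{n≥0} ℱ_n]. -/
/-!
For bounded `Y`, the conditional expectations `f n = μ[Y | F n]` form a reverse martingale.
Since `∫ (f n - f m)² = ∫ (f n)² - ∫ (f m)²` for `n ≤ m`, the decreasing sequence `∫ (f n)²`
makes `(f n)` Cauchy in `L²`, hence in `L¹`. Doob's maximal inequality for the martingale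
`k ↦ f (m - k) - f m` turns this into a.e. convergence, and the limit is `⨅ n, F n`-measurable
with the set integrals of `Y`, so it is `μ[Y | ⨅ n, F n]`.

For varying `X n → Xlim`, the tail suprema `Z m = sup_{n ≥ m} |X n - Xlim|` give
`|μ[X n | F n] - μ[Xlim | F n]| ≤ μ[Z m | F n]` for `n ≥ m`. As `n → ∞` the right side tends to
`μ[Z m | ⨅ n, F n]`, which decreases to `0` as `m → ∞` because its integral `∫ Z m` does.
-/

open MeasureTheory Filter Topology
open scoped NNReal ENNReal

namespace BackwardMartingale

section TailSup

noncomputable def tailSupDist (u : ℕ → ℝ) (l : ℝ) (m : ℕ) : ℝ := ⨆ k, |u (m + k) - l|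

variable {u : ℕ → ℝ} {l : ℝ}

lemma tailSupDist_nonneg (u : ℕ → ℝ) (l : ℝ) (m : ℕ) : 0 ≤ tailSupDist u l m :=
  Real.iSup_nonneg fun _ => abs_nonneg _

lemma tailSupDist_le {C : ℝ} {m : ℕ} (h : ∀ k, |u (m + k) - l| ≤ C) : tailSupDist u l m ≤ C :=
  ciSup_le h

lemma abs_tailSupDist_le {M : ℝ} (hu : ∀ n, |u n| ≤ M) (hl : |l| ≤ M) (m : ℕ) :
    |tailSupDist u l m| ≤ 2 * M := by
  rw [abs_of_nonneg (tailSupDist_nonneg u l m)]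
  exact tailSupDist_le fun k => (abs_sub _ _).trans (by linarith [hu (m + k)])

lemma abs_sub_le_tailSupDist (hu : Tendsto u atTop (𝓝 l)) {m n : ℕ} (hmn : m ≤ n) :
    |u n - l| ≤ tailSupDist u l m := by
  have hbdd : BddAbove (Set.range fun k => |u (m + k) - l|) :=
    Tendsto.bddAbove_range (a := 0) <| by
      simpa [add_comm m] using (((tendsto_add_atTop_iff_nat m).2 hu).sub_const l).abs
  obtain ⟨k, rfl⟩ := Nat.exists_eq_add_of_le hmn
  exact le_ciSup hbdd k

lemma antitone_tailSupDist (hu : Tendsto u atTop (𝓝 l)) : Antitone (tailSupDist u l) :=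
  fun _ _ hmm' => ciSup_le fun _ => abs_sub_le_tailSupDist hu (hmm'.trans (Nat.le_add_right _ _))

lemma tendsto_tailSupDist_zero (hu : Tendsto u atTop (𝓝 l)) :
    Tendsto (tailSupDist u l) atTop (𝓝 0) := by
  rw [Metric.tendsto_atTop]
  intro ε hε
  obtain ⟨N, hN⟩ := Metric.tendsto_atTop.1 hu (ε / 2) (half_pos hε)
  refine ⟨N, fun m hm => ?_⟩
  rw [Real.dist_eq, sub_zero, abs_of_nonneg (tailSupDist_nonneg u l m)]
  refine (tailSupDist_le fun k => ?_).trans_lt (half_lt_self hε)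
  simpa only [Real.dist_eq] using (hN (m + k) (by omega)).le

lemma tendsto_of_abs_sub_le_of_tendsto {a b w : ℕ → ℝ} {c : ℕ → ℕ → ℝ}
    (hb : Tendsto b atTop (𝓝 l)) (hc : ∀ m, Tendsto (c m) atTop (𝓝 (w m)))
    (hw : Tendsto w atTop (𝓝 0)) (hab : ∀ m n, m ≤ n → |a n - b n| ≤ c m n) :
    Tendsto a atTop (𝓝 l) := by
  suffices Tendsto (fun n => a n - b n) atTop (𝓝 0) by simpa using this.add hb
  rw [Metric.tendsto_atTop]
  intro ε hε
  obtain ⟨m, hm⟩ := (hw.eventually (gt_mem_nhds hε)).exists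
  obtain ⟨N, hN⟩ := eventually_atTop.1 ((hc m).eventually (gt_mem_nhds hm))
  refine ⟨max m N, fun n hn => ?_⟩
  rw [Real.dist_eq, sub_zero]
  exact (hab m n (le_of_max_le_left hn)).trans_lt (hN n (le_of_max_le_right hn))

end TailSup

section CondExp

variable {Ω : Type*} {m0 : MeasurableSpace Ω} {μ : Measure Ω}

lemma integrable_of_ae_abs_le [IsFiniteMeasure μ] {f : Ω → ℝ} (hf : AEStronglyMeasurable f μ)
    {C : ℝ} (hfC : ∀ᵐ ω ∂μ, |f ω| ≤ C) : Integrable f μ :=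
  .of_bound hf C (by simpa only [Real.norm_eq_abs] using hfC)

lemma abs_condExp_sub_condExp_le {m : MeasurableSpace Ω} {U V Z : Ω → ℝ}
    (hU : Integrable U μ) (hV : Integrable V μ) (hZ : Integrable Z μ)
    (hUV : ∀ᵐ ω ∂μ, |U ω - V ω| ≤ Z ω) :
    ∀ᵐ ω ∂μ, |μ[U | m] ω - μ[V | m] ω| ≤ μ[Z | m] ω := by
  filter_upwards [condExp_sub hU hV m, abs_condExp_ae_le_condExp_abs (m := m) (μ := μ) (U - V),
    condExp_mono (m := m) (hU.sub hV).abs hZ hUV] with ω hsub habs hmono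
  rw [← Pi.sub_apply, ← hsub]
  exact habs.trans hmono

lemma integral_mul_condExp {m : MeasurableSpace Ω} (hm : m ≤ m0) [SigmaFinite (μ.trim hm)]
    {h g : Ω → ℝ} (hh : StronglyMeasurable[m] h) (hhg : Integrable (h * g) μ)
    (hg : Integrable g μ) :
    ∫ ω, h ω * μ[g | m] ω ∂μ = ∫ ω, h ω * g ω ∂μ := calc
  _ = ∫ ω, μ[h * g | m] ω ∂μ :=
    integral_congr_ae (condExp_mul_of_stronglyMeasurable_left hh hhg hg).symm
  _ = _ := integral_condExp hm

lemma memLp_condExp_of_ae_abs_le [IsFiniteMeasure μ] {m : MeasurableSpace Ω} (hm : m ≤ m0)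
    {Y : Ω → ℝ} {M : ℝ} (hY : ∀ᵐ ω ∂μ, |Y ω| ≤ M) (p : ℝ≥0∞) : MemLp (μ[Y | m]) p μ :=
  .of_bound (stronglyMeasurable_condExp.mono hm).aestronglyMeasurable M
    (by simpa only [Real.norm_eq_abs] using ae_bdd_abs_condExp_of_ae_bdd_abs hY)

lemma integral_sq_condExp_sub_condExp [IsFiniteMeasure μ] {m₁ m₂ : MeasurableSpace Ω}
    (h₂₁ : m₂ ≤ m₁) (hm₁ : m₁ ≤ m0) {Y : Ω → ℝ} {M : ℝ} (hY : ∀ᵐ ω ∂μ, |Y ω| ≤ M) :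
    ∫ ω, (μ[Y | m₁] ω - μ[Y | m₂] ω) ^ 2 ∂μ =
      ∫ ω, μ[Y | m₁] ω ^ 2 ∂μ - ∫ ω, μ[Y | m₂] ω ^ 2 ∂μ := by
  have hm₂ := h₂₁.trans hm₁
  set f₁ := μ[Y | m₁]
  set f₂ := μ[Y | m₂]
  have hf₁ := memLp_condExp_of_ae_abs_le hm₁ hY 2
  have hf₂ := memLp_condExp_of_ae_abs_le hm₂ hY 2
  have h₂₁int : Integrable (f₂ * f₁) μ := hf₂.integrable_mul hf₁
  have hcross : ∫ ω, f₂ ω * f₁ ω ∂μ = ∫ ω, f₂ ω ^ 2 ∂μ := calc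
    _ = ∫ ω, f₂ ω * μ[f₁ | m₂] ω ∂μ :=
      (integral_mul_condExp hm₂ stronglyMeasurable_condExp h₂₁int integrable_condExp).symm
    _ = ∫ ω, f₂ ω ^ 2 ∂μ := integral_congr_ae <| by
      filter_upwards [condExp_condExp_of_le (μ := μ) (f := Y) h₂₁ hm₁] with ω hω
      rw [hω, sq]
  calc ∫ ω, (f₁ ω - f₂ ω) ^ 2 ∂μ
      = ∫ ω, (f₁ ω ^ 2 + f₂ ω ^ 2 - 2 * (f₂ ω * f₁ ω)) ∂μ := by congr 1; ext ω; ring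
    _ = ∫ ω, f₁ ω ^ 2 ∂μ + ∫ ω, f₂ ω ^ 2 ∂μ - 2 * ∫ ω, f₂ ω * f₁ ω ∂μ := by
      have hsq : Integrable (fun ω => f₁ ω ^ 2 + f₂ ω ^ 2) μ :=
        hf₁.integrable_sq.add hf₂.integrable_sq
      have hprod : Integrable (fun ω => 2 * (f₂ ω * f₁ ω)) μ := h₂₁int.const_mul 2
      rw [integral_sub hsq hprod, integral_add hf₁.integrable_sq hf₂.integrable_sq,
        integral_const_mul]
    _ = _ := by rw [hcross]; ring

lemma sq_integral_abs_le_integral_sq [IsProbabilityMeasure μ] {g : Ω → ℝ} (hg : MemLp g 2 μ) :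
    (∫ ω, |g ω| ∂μ) ^ 2 ≤ ∫ ω, g ω ^ 2 ∂μ := by
  simpa only [sq_abs] using even_two.convexOn_pow.map_integral_le (continuous_pow 2).continuousOn
    isClosed_univ (ae_of_all _ fun _ => Set.mem_univ _) (hg.integrable one_le_two).abs
    (by simpa only [Function.comp_def, sq_abs] using hg.integrable_sq)

lemma maximal_ineq_abs [IsFiniteMeasure μ] {𝒢 : Filtration ℕ m0} {g : ℕ → Ω → ℝ}
    (hg : Martingale g 𝒢 μ) (ε : ℝ≥0) (n : ℕ) :
    ε * μ {ω | ∃ k ≤ n, (ε : ℝ) ≤ |g k ω|} ≤ ENNReal.ofReal (∫ ω, |g n ω| ∂μ) := by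
  have hsub : Submartingale |g| 𝒢 μ := hg.submartingale.sup hg.neg.submartingale
  have hset : {ω | ∃ k ≤ n, (ε : ℝ) ≤ |g k ω|} = {ω | (ε : ℝ) ≤
      (Finset.range (n + 1)).sup' Finset.nonempty_range_add_one fun k => |g| k ω} := by
    ext ω
    simp [Finset.le_sup'_iff]
  rw [hset]
  exact (maximal_ineq hsub (fun k ω => abs_nonneg (g k ω)) n).trans <| ENNReal.ofReal_le_ofReal <|
    setIntegral_le_integral (hg.integrable n).abs (ae_of_all _ fun ω => abs_nonneg (g n ω))

lemma ae_tendsto_condExp_zero_of_antitone {m : MeasurableSpace Ω} (hm : m ≤ m0)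
    [SigmaFinite (μ.trim hm)] {Z : ℕ → Ω → ℝ} (hZint : ∀ k, Integrable (Z k) μ)
    (hZ0 : ∀ k, 0 ≤ᵐ[μ] Z k) (hZanti : ∀ᵐ ω ∂μ, Antitone fun k => Z k ω)
    (hZlim : ∀ᵐ ω ∂μ, Tendsto (fun k => Z k ω) atTop (𝓝 0)) :
    ∀ᵐ ω ∂μ, Tendsto (fun k => μ[Z k | m] ω) atTop (𝓝 0) := by
  set W := fun k => μ[Z k | m]
  have hWanti : ∀ᵐ ω ∂μ, Antitone fun k => W k ω := by
    have : ∀ k k', ∀ᵐ ω ∂μ, k ≤ k' → W k' ω ≤ W k ω := fun k k' =>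
      eventually_imp_distrib_left.2 fun hk => condExp_mono (hZint k') (hZint k) <| by
        filter_upwards [hZanti] with ω hω using hω hk
    filter_upwards [ae_all_iff.2 fun k => ae_all_iff.2 (this k)] with ω hω k k' hk
    exact hω k k' hk
  have hW0 : ∀ᵐ ω ∂μ, ∀ k, 0 ≤ W k ω := ae_all_iff.2 fun k => condExp_nonneg (hZ0 k)
  -- `W` decreases to some `c ≥ 0` with `∫ c ≤ ∫ W k = ∫ Z k → 0`, so `c = 0`.
  set c := fun ω => ⨅ k, W k ω
  have hWc : ∀ᵐ ω ∂μ, Tendsto (fun k => W k ω) atTop (𝓝 (c ω)) := by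
    filter_upwards [hWanti, hW0] with ω h₁ h₂
    exact tendsto_atTop_ciInf h₁ ⟨0, Set.forall_mem_range.2 h₂⟩
  have hc0 : 0 ≤ᵐ[μ] c := by
    filter_upwards [hWc, hW0] with ω h₁ h₂ using ge_of_tendsto' h₁ h₂
  have hcW : ∀ k, c ≤ᵐ[μ] W k := fun k => by
    filter_upwards [hWanti, hWc] with ω h₁ h₂ using h₁.le_of_tendsto h₂ k
  have hcint : Integrable c μ := integrable_condExp.mono'
    (aestronglyMeasurable_of_tendsto_ae atTop (fun _ => integrable_condExp.1) hWc) <| by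
      filter_upwards [hc0, hcW 0] with ω h₁ h₂
      rwa [Real.norm_eq_abs, abs_of_nonneg h₁]
  have hintZ : Tendsto (fun k => ∫ ω, Z k ω ∂μ) atTop (𝓝 0) := by
    simpa using tendsto_integral_of_dominated_convergence (Z 0) (fun k => (hZint k).1) (hZint 0)
      (fun k => by
        filter_upwards [hZ0 k, hZanti] with ω h₁ h₂
        rw [Real.norm_eq_abs, abs_of_nonneg h₁]
        exact h₂ (Nat.zero_le k)) hZlim
  have hintc : ∫ ω, c ω ∂μ ≤ 0 := ge_of_tendsto' hintZ fun k =>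
    (integral_mono_ae hcint integrable_condExp (hcW k)).trans_eq (integral_condExp hm)
  have hc : c =ᵐ[μ] 0 :=
    (integral_eq_zero_iff_of_nonneg_ae hc0 hcint).1 (le_antisymm hintc (integral_nonneg_of_ae hc0))
  filter_upwards [hWc, hc] with ω h₁ h₂
  rwa [h₂] at h₁

end CondExp

section Antitone

variable {Ω : Type*} {m0 : MeasurableSpace Ω} {μ : Measure Ω} {F : ℕ → MeasurableSpace Ω}

-- `F m ≤ F (m - 1) ≤ ⋯ ≤ F 0 = F 0 = ⋯`: truncated subtraction freezes it at `F 0`.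
def revFiltration (hFle : ∀ n, F n ≤ m0) (hFanti : Antitone F) (m : ℕ) : Filtration ℕ m0 where
  seq k := F (m - k)
  mono' _ _ hij := hFanti (Nat.sub_le_sub_left hij m)
  le' _ := hFle _

lemma maximal_ineq_condExp_antitone [IsFiniteMeasure μ] (hFle : ∀ n, F n ≤ m0)
    (hFanti : Antitone F) (Y : Ω → ℝ) (ε : ℝ≥0) {n m : ℕ} (hnm : n ≤ m) :
    ε * μ {ω | ∃ j, n ≤ j ∧ j ≤ m ∧ (ε : ℝ) ≤ |μ[Y | F j] ω - μ[Y | F m] ω|} ≤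
      ENNReal.ofReal (∫ ω, |μ[Y | F n] ω - μ[Y | F m] ω| ∂μ) := by
  let 𝒢 := revFiltration hFle hFanti m
  have hg : Martingale (fun k => μ[Y | 𝒢 k] - μ[Y | F m]) 𝒢 μ :=
    (martingale_condExp Y 𝒢 μ).sub
      (martingale_const_fun 𝒢 μ stronglyMeasurable_condExp integrable_condExp)
  convert maximal_ineq_abs hg ε (m - n) using 4
  · ext ω
    constructor
    · rintro ⟨j, hnj, hjm, h⟩
      exact ⟨m - j, by omega, by simpa [𝒢, revFiltration, Nat.sub_sub_self hjm] using h⟩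
    · rintro ⟨k, hk, h⟩
      exact ⟨m - k, by omega, by omega, h⟩
  · simp [𝒢, revFiltration, Nat.sub_sub_self hnm]

lemma exists_integral_abs_condExp_sub_le [IsProbabilityMeasure μ] (hFle : ∀ n, F n ≤ m0)
    (hFanti : Antitone F) {Y : Ω → ℝ} {M : ℝ} (hY : ∀ᵐ ω ∂μ, |Y ω| ≤ M) {ε : ℝ} (hε : 0 < ε) :
    ∃ N, ∀ n m, N ≤ n → n ≤ m → ∫ ω, |μ[Y | F n] ω - μ[Y | F m] ω| ∂μ ≤ ε := by
  set φ : ℕ → ℝ := fun k => ∫ ω, μ[Y | F k] ω ^ 2 ∂μ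
  have hφ : ∀ n m, n ≤ m → ∫ ω, (μ[Y | F n] ω - μ[Y | F m] ω) ^ 2 ∂μ = φ n - φ m :=
    fun n m hnm => integral_sq_condExp_sub_condExp (hFanti hnm) (hFle n) hY
  have hφanti : Antitone φ := fun n m hnm =>
    sub_nonneg.1 (hφ n m hnm ▸ integral_nonneg fun _ => sq_nonneg _)
  have hφcauchy : CauchySeq φ := (tendsto_atTop_ciInf hφanti
    ⟨0, Set.forall_mem_range.2 fun _ => integral_nonneg fun _ => sq_nonneg _⟩).cauchySeq
  obtain ⟨N, hN⟩ := Metric.cauchySeq_iff'.1 hφcauchy (ε ^ 2) (by positivity)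
  refine ⟨N, fun n m hn hnm => ?_⟩
  have hdist := hN m (hn.trans hnm)
  rw [Real.dist_eq, abs_lt] at hdist
  refine (pow_le_pow_iff_left₀ (integral_nonneg fun _ => abs_nonneg _) hε.le two_ne_zero).1 ?_
  calc (∫ ω, |μ[Y | F n] ω - μ[Y | F m] ω| ∂μ) ^ 2
      ≤ ∫ ω, (μ[Y | F n] ω - μ[Y | F m] ω) ^ 2 ∂μ := sq_integral_abs_le_integral_sq <|
        (memLp_condExp_of_ae_abs_le (hFle n) hY 2).sub (memLp_condExp_of_ae_abs_le (hFle m) hY 2)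
    _ = φ n - φ m := hφ n m hnm
    _ ≤ ε ^ 2 := by linarith [hφanti hn]

lemma maximal_ineq_condExp_antitone_tail [IsFiniteMeasure μ] (hFle : ∀ n, F n ≤ m0)
    (hFanti : Antitone F) (Y : Ω → ℝ) {n : ℕ} {ε δ : ℝ} (hε : 0 ≤ ε)
    (hδ : ∀ m, n ≤ m → ∫ ω, |μ[Y | F n] ω - μ[Y | F m] ω| ∂μ ≤ δ) :
    ENNReal.ofReal ε * μ {ω | ∃ j, n ≤ j ∧ 2 * ε ≤ |μ[Y | F j] ω - μ[Y | F n] ω|} ≤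
      ENNReal.ofReal δ := by
  set f := fun k => μ[Y | F k]
  have hunion : {ω | ∃ j, n ≤ j ∧ 2 * ε ≤ |f j ω - f n ω|} =
      ⋃ k, {ω | ∃ j, n ≤ j ∧ j ≤ n + k ∧ 2 * ε ≤ |f j ω - f n ω|} := by
    ext ω
    simp only [Set.mem_ofPred_eq, Set.mem_iUnion]
    exact ⟨fun ⟨j, hnj, h⟩ => ⟨j, j, hnj, by omega, h⟩, fun ⟨_, j, hnj, _, h⟩ => ⟨j, hnj, h⟩⟩
  have hmono : Monotone fun k => {ω | ∃ j, n ≤ j ∧ j ≤ n + k ∧ 2 * ε ≤ |f j ω - f n ω|} :=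
    fun k k' hk ω ⟨j, hnj, hjk, h⟩ => ⟨j, hnj, by omega, h⟩
  rw [hunion, hmono.measure_iUnion, ENNReal.mul_iSup]
  refine iSup_le fun k => le_trans ?_ ((maximal_ineq_condExp_antitone hFle hFanti Y
    ε.toNNReal (Nat.le_add_right n k)).trans (ENNReal.ofReal_le_ofReal (hδ _ (by omega))))
  refine mul_le_mul_right (measure_mono fun ω hω => ?_) _
  obtain ⟨j, hnj, hjk, h⟩ := hω
  -- One of `j`, `n` lies at distance `≥ ε` from the endpoint `n + k`.
  have htri : |f j ω - f n ω| ≤ |f j ω - f (n + k) ω| + |f n ω - f (n + k) ω| :=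
    abs_sub_comm (f n ω) (f (n + k) ω) ▸ abs_sub_le _ _ _
  rcases le_total |f n ω - f (n + k) ω| |f j ω - f (n + k) ω| with hle | hle
  · exact ⟨j, hnj, hjk, by rw [Real.coe_toNNReal _ hε]; linarith⟩
  · exact ⟨n, le_rfl, by omega, by rw [Real.coe_toNNReal _ hε]; linarith⟩

lemma ae_cauchySeq_condExp_antitone [IsProbabilityMeasure μ] (hFle : ∀ n, F n ≤ m0)
    (hFanti : Antitone F) {Y : Ω → ℝ} {M : ℝ} (hY : ∀ᵐ ω ∂μ, |Y ω| ≤ M) :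
    ∀ᵐ ω ∂μ, CauchySeq fun n => μ[Y | F n] ω := by
  have hosc : ∀ ε : ℝ, 0 < ε →
      ∀ᵐ ω ∂μ, ∃ N, ∀ n ≥ N, |μ[Y | F n] ω - μ[Y | F N] ω| < 2 * ε := by
    intro ε hε
    simp only [ae_iff, not_exists, not_forall, not_lt]
    refine nonpos_iff_eq_zero.1 (ENNReal.le_of_forall_pos_le_add fun δ hδ _ => ?_)
    obtain ⟨N, hN⟩ := exists_integral_abs_condExp_sub_le hFle hFanti hY
      (mul_pos hε (NNReal.coe_pos.2 hδ))
    have hbad := maximal_ineq_condExp_antitone_tail hFle hFanti Y hε.le (hN N · le_rfl)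
    rw [ENNReal.ofReal_mul hε.le, ENNReal.ofReal_coe_nnreal,
      ENNReal.mul_le_mul_iff_right (by simpa using hε) ENNReal.ofReal_ne_top] at hbad
    exact (measure_mono fun ω hω => by simpa [ge_iff_le] using hω N).trans
      (zero_add (δ : ℝ≥0∞) ▸ hbad)
  filter_upwards [ae_all_iff.2 fun i : ℕ => hosc (1 / (i + 1)) Nat.one_div_pos_of_nat] with ω hω
  refine Metric.cauchySeq_iff'.2 fun η hη => ?_
  obtain ⟨i, hi⟩ := exists_nat_one_div_lt (half_pos hη)
  obtain ⟨N, hN⟩ := hω i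
  exact ⟨N, fun n hn => by rw [Real.dist_eq]; linarith [hN n hn]⟩

lemma measurable_iInf_limsup (hFanti : Antitone F) {u : ℕ → Ω → ℝ}
    (hu : ∀ n, Measurable[F n] (u n)) :
    Measurable[⨅ n, F n] fun ω => limsup (fun n => u n ω) atTop := by
  refine fun s hs => MeasurableSpace.measurableSet_iInf.2 fun k => ?_
  have htail : (fun ω => limsup (fun n => u n ω) atTop) =
      fun ω => limsup (fun n => u (n + k) ω) atTop :=
    funext fun ω => (limsup_nat_add (fun n => u n ω) k).symm
  rw [htail]
  exact Measurable.limsup (fun n => (hu (n + k)).mono (hFanti (Nat.le_add_left k n)) le_rfl) hs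

lemma ae_eq_condExp_iInf_of_tendsto [IsFiniteMeasure μ] (hFle : ∀ n, F n ≤ m0)
    {Y : Ω → ℝ} (hYint : Integrable Y μ) {M : ℝ} (hY : ∀ᵐ ω ∂μ, |Y ω| ≤ M) {g : Ω → ℝ}
    (hg : StronglyMeasurable[⨅ n, F n] g)
    (hlim : ∀ᵐ ω ∂μ, Tendsto (fun n => μ[Y | F n] ω) atTop (𝓝 (g ω))) :
    g =ᵐ[μ] μ[Y | ⨅ n, F n] := by
  have hle : ⨅ n, F n ≤ m0 := iInf_le_of_le 0 (hFle 0)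
  have hbdd : ∀ n, ∀ᵐ ω ∂μ, ‖μ[Y | F n] ω‖ ≤ M := fun n => by
    simpa only [Real.norm_eq_abs] using ae_bdd_abs_condExp_of_ae_bdd_abs hY
  have hgint : Integrable g μ := .of_bound (hg.mono hle).aestronglyMeasurable M <| by
    filter_upwards [hlim, ae_all_iff.2 hbdd] with ω h₁ h₂
    exact le_of_tendsto h₁.norm (Eventually.of_forall h₂)
  refine ae_eq_condExp_of_forall_setIntegral_eq hle hYint (fun _ _ _ => hgint.integrableOn)
    (fun s hs _ => ?_) hg.aestronglyMeasurable
  have hconst : ∀ n, ∫ ω in s, μ[Y | F n] ω ∂μ = ∫ ω in s, Y ω ∂μ := fun n =>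
    setIntegral_condExp (hFle n) hYint (MeasurableSpace.measurableSet_iInf.1 hs n)
  have hconv : Tendsto (fun n => ∫ ω in s, μ[Y | F n] ω ∂μ) atTop (𝓝 (∫ ω in s, g ω ∂μ)) :=
    tendsto_integral_of_dominated_convergence (fun _ => M)
      (fun n => (stronglyMeasurable_condExp.mono (hFle n)).aestronglyMeasurable.restrict)
      (integrable_const M) (fun n => ae_restrict_of_ae (hbdd n)) (ae_restrict_of_ae hlim)
  simp only [hconst] at hconv
  exact tendsto_nhds_unique hconv tendsto_const_nhds

theorem ae_tendsto_condExp_iInf [IsProbabilityMeasure μ] (hFle : ∀ n, F n ≤ m0)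
    (hFanti : Antitone F) {Y : Ω → ℝ} (hYm : AEStronglyMeasurable Y μ) {M : ℝ}
    (hY : ∀ᵐ ω ∂μ, |Y ω| ≤ M) :
    ∀ᵐ ω ∂μ, Tendsto (fun n => μ[Y | F n] ω) atTop (𝓝 (μ[Y | ⨅ n, F n] ω)) := by
  set g := fun ω => limsup (fun n => μ[Y | F n] ω) atTop
  have hlim : ∀ᵐ ω ∂μ, Tendsto (fun n => μ[Y | F n] ω) atTop (𝓝 (g ω)) := by
    filter_upwards [ae_cauchySeq_condExp_antitone hFle hFanti hY] with ω hω
    obtain ⟨c, hc⟩ := cauchySeq_tendsto_of_complete hω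
    rwa [show g ω = c from hc.limsup_eq]
  have hg : StronglyMeasurable[⨅ n, F n] g :=
    (measurable_iInf_limsup hFanti fun _ =>
      stronglyMeasurable_condExp.measurable).stronglyMeasurable
  filter_upwards [hlim, ae_eq_condExp_iInf_of_tendsto hFle (integrable_of_ae_abs_le hYm hY) hY hg
    hlim] with ω h₁ h₂
  rwa [← h₂]

end Antitone

end BackwardMartingale

open BackwardMartingale

/-- generalized backward martingale convergence. If a uniformly bounded
sequence `X n` converges a.s. to `X` and `(ℱ n)` is a decreasing sequence of sub-σ-fields,
then `E[X n | ℱ n]` converges a.s. to `E[X | ⋂ n, ℱ n]`. -/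
theorem stmt_3 {Ω : Type*} [m0 : MeasurableSpace Ω]
    (μ : Measure Ω) [IsProbabilityMeasure μ]
    (X : ℕ → Ω → ℝ) (Xlim : Ω → ℝ) (F : ℕ → MeasurableSpace Ω)
    (hFle : ∀ n, F n ≤ m0) (hFanti : Antitone F)
    (hXmeas : ∀ n, Measurable (X n)) (M : ℝ)
    (hXbdd : ∀ n, ∀ᵐ ω ∂μ, |X n ω| ≤ M)
    (hconv : ∀ᵐ ω ∂μ, Tendsto (fun n => X n ω) atTop (nhds (Xlim ω))) :
    ∀ᵐ ω ∂μ, Tendsto (fun n => (μ[X n | F n]) ω) atTop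
      (nhds ((μ[Xlim | ⨅ n, F n]) ω)) := by
  have hXlim_m : AEStronglyMeasurable Xlim μ :=
    aestronglyMeasurable_of_tendsto_ae atTop (fun n => (hXmeas n).aestronglyMeasurable) hconv
  have hXlim_b : ∀ᵐ ω ∂μ, |Xlim ω| ≤ M := by
    filter_upwards [hconv, ae_all_iff.2 hXbdd] with ω h₁ h₂
    exact le_of_tendsto h₁.abs (Eventually.of_forall h₂)
  set Z : ℕ → Ω → ℝ := fun m ω => tailSupDist (fun n => X n ω) (Xlim ω) m
  have hZm : ∀ m, AEStronglyMeasurable (Z m) μ := fun m => (AEMeasurable.iSup fun k =>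
    ((hXmeas (m + k)).aemeasurable.sub hXlim_m.aemeasurable).abs).aestronglyMeasurable
  have hZb : ∀ m, ∀ᵐ ω ∂μ, |Z m ω| ≤ 2 * M := fun m => by
    filter_upwards [ae_all_iff.2 hXbdd, hXlim_b] with ω h₁ h₂ using abs_tailSupDist_le h₁ h₂ m
  have hdom : ∀ᵐ ω ∂μ, ∀ m n, m ≤ n →
      |μ[X n | F n] ω - μ[Xlim | F n] ω| ≤ μ[Z m | F n] ω :=
    ae_all_iff.2 fun m => ae_all_iff.2 fun n => eventually_imp_distrib_left.2 fun hmn =>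
      abs_condExp_sub_condExp_le (integrable_of_ae_abs_le (hXmeas n).aestronglyMeasurable
        (hXbdd n)) (integrable_of_ae_abs_le hXlim_m hXlim_b)
        (integrable_of_ae_abs_le (hZm m) (hZb m))
        (by filter_upwards [hconv] with ω hω using abs_sub_le_tailSupDist hω hmn)
  have hZ_iInf : ∀ᵐ ω ∂μ, Tendsto (fun m => μ[Z m | ⨅ n, F n] ω) atTop (𝓝 0) :=
    ae_tendsto_condExp_zero_of_antitone (iInf_le_of_le 0 (hFle 0))
      (fun m => integrable_of_ae_abs_le (hZm m) (hZb m))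
      (fun m => ae_of_all _ fun ω => tailSupDist_nonneg ..)
      (by filter_upwards [hconv] with ω hω using antitone_tailSupDist hω)
      (by filter_upwards [hconv] with ω hω using tendsto_tailSupDist_zero hω)
  filter_upwards [ae_tendsto_condExp_iInf hFle hFanti hXlim_m hXlim_b,
    ae_all_iff.2 fun m => ae_tendsto_condExp_iInf hFle hFanti (hZm m) (hZb m), hZ_iInf, hdom]
    with ω hXlim hZ hZ0 hdomω
  exact tendsto_of_abs_sub_le_of_tendsto hXlim hZ hZ0 hdomω
end

section
/- Let E be a Polish space. There exists a jointly measurable map Φ : Δ(E) × [0,1] → E such that for every μ ∈ Δ(E), if U is uniformly distributed on [0,1], then Φ(μ, U) has law μ. -/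
/-!
Borel-embed `E` into `ℝ`. For a probability measure `μ` on `ℝ`, the quantile
`u ↦ inf {x | u ≤ μ (-∞, x]}` satisfies `quantile u ≤ t ↔ u ≤ μ (-∞, t]` for `u ∈ (0, 1)`,
by right continuity of the distribution function. This equivalence shows at once that the
quantile pushes the uniform law forward to `μ` and that it is jointly measurable in `(μ, u)`,
since `u ≤ μ (-∞, t]` is a measurable condition on the pair. Composing with a measurable left
inverse of the embedding gives `Φ`.
-/

open MeasureTheory ProbabilityTheory Set Filter Topology

namespace StieltjesFunction

noncomputable def quantile (F : StieltjesFunction ℝ) (u : ℝ) : ℝ :=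
  sInf {x | u ≤ F x}

theorem quantile_le_iff {F : StieltjesFunction ℝ} (hF₀ : Tendsto F atBot (𝓝 0))
    (hF₁ : Tendsto F atTop (𝓝 1)) {u : ℝ} (hu : u ∈ Ioo 0 1) (t : ℝ) :
    F.quantile u ≤ t ↔ u ≤ F t := by
  set S := {x | u ≤ F x}
  have hne : S.Nonempty := (hF₁.eventually (eventually_ge_nhds hu.2)).exists
  have hbdd : BddBelow S := by
    obtain ⟨a, ha⟩ := eventually_atBot.1 (hF₀.eventually (eventually_lt_nhds hu.1))
    exact ⟨a, fun y hy => le_of_not_ge fun hya => (ha y hya).not_ge hy⟩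
  refine ⟨fun h => ?_, fun h => csInf_le hbdd h⟩
  have hrc : Tendsto F (𝓝[>] t) (𝓝 (F t)) := (F.right_continuous t).mono Ioi_subset_Ici_self
  refine ge_of_tendsto hrc (eventually_nhdsWithin_of_forall fun x (hx : t < x) => ?_)
  obtain ⟨s, hs, hsx⟩ := (csInf_lt_iff hbdd hne).1 (h.trans_lt hx)
  exact hs.trans (F.mono hsx.le)

end StieltjesFunction

theorem map_volume_Icc_eq_of_le_iff {q : ℝ → ℝ} (hq : Measurable q) {μ : Measure ℝ}
    [IsProbabilityMeasure μ] (h : ∀ u ∈ Ioo (0 : ℝ) 1, ∀ t, q u ≤ t ↔ u ≤ μ.real (Iic t)) :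
    (volume.restrict (Icc (0 : ℝ) 1)).map q = μ := by
  refine Measure.ext_of_Iic _ _ fun t => ?_
  set c := μ.real (Iic t)
  have hpre : q ⁻¹' Iic t =ᵐ[volume.restrict (Icc 0 1)] Iic c := by
    rw [← Measure.restrict_congr_set Ioo_ae_eq_Icc]
    filter_upwards [ae_restrict_mem measurableSet_Ioo] with u hu
    exact propext (h u hu t)
  have hc : Iic c ∩ Icc 0 1 = Icc 0 c := by
    ext u
    simp only [mem_inter_iff, mem_Iic, mem_Icc]
    exact ⟨fun ⟨huc, hu0, _⟩ => ⟨hu0, huc⟩,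
      fun ⟨hu0, huc⟩ => ⟨huc, hu0, huc.trans measureReal_le_one⟩⟩
  rw [Measure.map_apply hq measurableSet_Iic, measure_congr hpre,
    Measure.restrict_apply measurableSet_Iic, hc, Real.volume_Icc, sub_zero]
  exact ofReal_measureReal

/-- The value `0` off probability measures and off `(0, 1)` is a junk value. -/
noncomputable def measureQuantile (μ : Measure ℝ) (u : ℝ) : ℝ :=
  if μ univ = 1 ∧ u ∈ Ioo 0 1 then (cdf μ).quantile u else 0

theorem measureQuantile_le_iff {μ : Measure ℝ} [IsProbabilityMeasure μ] {u : ℝ}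
    (hu : u ∈ Ioo 0 1) (t : ℝ) : measureQuantile μ u ≤ t ↔ u ≤ μ.real (Iic t) := by
  rw [measureQuantile, if_pos ⟨measure_univ, hu⟩,
    StieltjesFunction.quantile_le_iff (tendsto_cdf_atBot μ) (tendsto_cdf_atTop μ) hu, cdf_eq_real]

theorem measurable_uncurry_measureQuantile : Measurable (Function.uncurry measureQuantile) := by
  refine measurable_of_Iic fun t => ?_
  set G := {p : Measure ℝ × ℝ | p.1 univ = 1 ∧ p.2 ∈ Ioo 0 1}
  have hG : MeasurableSet G :=
    ((Measure.measurable_coe MeasurableSet.univ).comp measurable_fst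
      (measurableSet_singleton 1)).inter (measurable_snd measurableSet_Ioo)
  have hle : MeasurableSet {p : Measure ℝ × ℝ | p.2 ≤ p.1.real (Iic t)} :=
    measurableSet_le measurable_snd
      ((Measure.measurable_coe measurableSet_Iic).comp measurable_fst).ennreal_toReal
  have hpre : Function.uncurry measureQuantile ⁻¹' Iic t =
      G ∩ {p | p.2 ≤ p.1.real (Iic t)} ∪ Gᶜ ∩ {_p | 0 ≤ t} := by
    ext ⟨μ, u⟩
    by_cases hp : (μ, u) ∈ G
    · have : IsProbabilityMeasure μ := ⟨hp.1⟩
      simp [hp, measureQuantile_le_iff hp.2]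
    · have : measureQuantile μ u = 0 := if_neg hp
      simp [hp, this]
  rw [hpre]
  exact (hG.inter hle).union (hG.compl.inter (MeasurableSet.const _))

theorem measurable_measureQuantile (μ : Measure ℝ) : Measurable (measureQuantile μ) :=
  measurable_uncurry_measureQuantile.comp measurable_prodMk_left

theorem map_measureQuantile (μ : Measure ℝ) [IsProbabilityMeasure μ] :
    (volume.restrict (Icc (0 : ℝ) 1)).map (measureQuantile μ) = μ :=
  map_volume_Icc_eq_of_le_iff (measurable_measureQuantile μ)
    fun _ hu => measureQuantile_le_iff hu

/-- Blackwell–Dubins: for a Polish space `E` there is a jointly measurable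
map `Φ : Δ(E) × [0,1] → E` such that for every probability measure `μ`, the image of the
uniform law on `[0,1]` under `Φ(μ, ·)` is `μ`. -/
theorem stmt_7 {E : Type*} [MeasurableSpace E] [StandardBorelSpace E] [Nonempty E] :
    ∃ Φ : Measure E × ℝ → E, Measurable Φ ∧
      ∀ μ : Measure E, IsProbabilityMeasure μ →
        Measure.map (fun u => Φ (μ, u)) (volume.restrict (Set.Icc (0 : ℝ) 1)) = μ := by
  obtain ⟨f, hf⟩ := exists_measurableEmbedding_real E
  obtain ⟨g, hg, hgf⟩ := hf.exists_measurable_extend measurable_id fun _ => ‹Nonempty E›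
  refine ⟨fun p => g (measureQuantile (p.1.map f) p.2), ?_, fun μ hμ => ?_⟩
  · exact hg.comp (measurable_uncurry_measureQuantile.comp
      (((Measure.measurable_map f hf.measurable).comp measurable_fst).prodMk measurable_snd))
  · have : IsProbabilityMeasure (μ.map f) :=
      Measure.isProbabilityMeasure_map hf.measurable.aemeasurable
    calc _ = ((volume.restrict (Icc 0 1)).map (measureQuantile (μ.map f))).map g :=
          (Measure.map_map hg (measurable_measureQuantile _)).symm
      _ = μ := by
        rw [map_measureQuantile, Measure.map_map hg hf.measurable, hgf, Measure.map_id]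
end

section
/- Let λ ∈ (0,1] and let (p_q)_{q≥0} and (p̂_q)_{q≥0} be [0,1]-valued random variables on a probability space such that E[(p_q)² − (p̂_q)²] ≥ 0 for all q, and such that the telescoping bound ∑_{q≥0} λ(1−λ)^q E[(p_q)² − (p̂_q)²] ≤ ∑_{q≥0} λ(1−λ)^q E[(p̂_{q+1})² − (p̂_q)²] + 2C/n holds for constants C > 0, n ≥ 1. Then ∑_{q≥0} λ(1−λ)^q E[|p_q − p̂_q|] ≤ (λ + 2C/n)^{1/2}. -/
/-!
The martingale property `E[p_q | p̂_q] = p̂_q` kills the cross term, so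
`E[p_q² − p̂_q²] = E[(p_q − p̂_q)²]`, and Jensen gives `E|p_q − p̂_q| ≤ E[p_q² − p̂_q²]^{1/2}`.
Cauchy–Schwarz for the probability weights `λ(1−λ)^q` bounds the discounted sum by the square
root of the discounted sum of `E[p_q² − p̂_q²]`. By hypothesis the latter is at most a discounted
telescoping sum of the numbers `E[p̂_q²] ∈ [0,1]` plus `2C/n`, and Abel summation bounds that
telescoping sum by its first weight `λ`.
-/

open MeasureTheory ProbabilityTheory

section Integrals

variable {Ω : Type*} {m m₀ : MeasurableSpace Ω} {μ : Measure Ω}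

theorem integral_sub_condExp_sq (hm : m ≤ m₀) [IsFiniteMeasure μ] {X : Ω → ℝ}
    (hX : MemLp X 2 μ) :
    ∫ ω, (X ω - (μ[X | m]) ω) ^ 2 ∂μ = ∫ ω, X ω ^ 2 ∂μ - ∫ ω, (μ[X | m]) ω ^ 2 ∂μ := calc
  _ = ∫ ω, (Var[X; μ | m]) ω ∂μ := (integral_condExp hm).symm
  _ = ∫ ω, (μ[X ^ 2 | m] - μ[X | m] ^ 2 : Ω → ℝ) ω ∂μ :=
    integral_congr_ae (condVar_ae_eq_condExp_sq_sub_sq_condExp hm hX)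
  _ = _ := by
    have hsq : Integrable (μ[X | m] ^ 2) μ := (hX.condExp one_le_two).integrable_sq
    rw [integral_sub' integrable_condExp hsq, integral_condExp hm]
    rfl

theorem integral_sq_sub_sq_of_condExp_ae_eq (hm : m ≤ m₀) [IsFiniteMeasure μ] {X Y : Ω → ℝ}
    (hX : MemLp X 2 μ) (hXY : μ[X | m] =ᵐ[μ] Y) :
    ∫ ω, (X ω ^ 2 - Y ω ^ 2) ∂μ = ∫ ω, (X ω - Y ω) ^ 2 ∂μ := by
  have hY : MemLp Y 2 μ := (hX.condExp one_le_two).ae_eq hXY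
  have hsq : ∫ ω, Y ω ^ 2 ∂μ = ∫ ω, (μ[X | m]) ω ^ 2 ∂μ :=
    integral_congr_ae (hXY.symm.fun_comp (· ^ 2))
  have hsub : ∫ ω, (X ω - Y ω) ^ 2 ∂μ = ∫ ω, (X ω - (μ[X | m]) ω) ^ 2 ∂μ :=
    integral_congr_ae (hXY.mono fun ω h ↦ by simp only [h])
  rw [integral_sub hX.integrable_sq hY.integrable_sq, hsq, hsub, integral_sub_condExp_sq hm hX]

theorem integral_abs_le_sqrt_integral_sq [IsProbabilityMeasure μ] {X : Ω → ℝ}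
    (hX : MemLp X 2 μ) : ∫ ω, |X ω| ∂μ ≤ √(∫ ω, X ω ^ 2 ∂μ) := by
  have hvar := variance_eq_sub hX.abs
  simp only [Pi.pow_apply, Pi.abs_apply, sq_abs] at hvar
  exact (le_abs_self _).trans (Real.abs_le_sqrt (by linarith [variance_nonneg |X| μ]))

theorem memLp_of_ae_mem_Icc_zero_one [IsFiniteMeasure μ] {f : Ω → ℝ} (hf : Measurable f)
    (hf01 : ∀ᵐ ω ∂μ, f ω ∈ Set.Icc 0 1) (p : ENNReal) : MemLp f p μ :=
  MemLp.of_bound hf.aestronglyMeasurable 1 (hf01.mono fun ω h ↦ by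
    rw [Real.norm_eq_abs, abs_le]; constructor <;> linarith [h.1, h.2])

theorem integral_mem_Icc_zero_one [IsProbabilityMeasure μ] {f : Ω → ℝ}
    (hf : ∀ᵐ ω ∂μ, f ω ∈ Set.Icc 0 1) : ∫ ω, f ω ∂μ ∈ Set.Icc 0 1 := by
  refine ⟨integral_nonneg_of_ae (hf.mono fun _ h ↦ h.1), ?_⟩
  calc ∫ ω, f ω ∂μ ≤ ∫ _, (1 : ℝ) ∂μ :=
        integral_mono_of_nonneg (hf.mono fun _ h ↦ h.1) (integrable_const 1) (hf.mono fun _ h ↦ h.2)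
    _ = 1 := by simp

end Integrals

theorem summable_and_tsum_mul_sqrt_le {ι : Type*} {w c : ι → ℝ} (hw : ∀ i, 0 ≤ w i)
    (hc : ∀ i, 0 ≤ c i) (hw_sum : Summable w) (hwc_sum : Summable fun i ↦ w i * c i) :
    (Summable fun i ↦ w i * √(c i)) ∧
      ∑' i, w i * √(c i) ≤ √(∑' i, w i) * √(∑' i, w i * c i) := by
  have hrpow : ∀ x : ℝ, 0 ≤ x → √x ^ (2 : ℝ) = x := fun x hx ↦ by
    rw [Real.rpow_two, Real.sq_sqrt hx]
  have hsplit : ∀ i, √(w i) * √(w i * c i) = w i * √(c i) := fun i ↦ by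
    rw [Real.sqrt_mul (hw i), ← mul_assoc, Real.mul_self_sqrt (hw i)]
  have hCS := Real.summable_and_inner_le_Lp_mul_Lq_tsum_of_nonneg Real.HolderConjugate.two_two
    (f := fun i ↦ √(w i)) (g := fun i ↦ √(w i * c i)) (fun _ ↦ Real.sqrt_nonneg _)
    (fun _ ↦ Real.sqrt_nonneg _)
    (by simpa only [hrpow _ (hw _)] using hw_sum)
    (by simpa only [hrpow _ (mul_nonneg (hw _) (hc _))] using hwc_sum)
  simp only [hsplit, hrpow _ (hw _), hrpow _ (mul_nonneg (hw _) (hc _)),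
    ← Real.sqrt_eq_rpow] at hCS
  exact hCS

theorem tsum_mul_le_sqrt_tsum_mul {ι : Type*} {w a c : ι → ℝ} (hw₀ : ∀ i, 0 ≤ w i)
    (hw : HasSum w 1) (ha₀ : ∀ i, 0 ≤ a i) (ha : ∀ i, a i ≤ √(c i))
    (hc : ∀ i, c i ∈ Set.Icc 0 1) : ∑' i, w i * a i ≤ √(∑' i, w i * c i) := by
  obtain ⟨hsum_sqrt, hCS⟩ := summable_and_tsum_mul_sqrt_le hw₀ (fun i ↦ (hc i).1) hw.summable
    (hw.summable.of_nonneg_of_le (fun i ↦ mul_nonneg (hw₀ i) (hc i).1)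
      fun i ↦ mul_le_of_le_one_right (hw₀ i) (hc i).2)
  have hterm i : w i * a i ≤ w i * √(c i) := mul_le_mul_of_nonneg_left (ha i) (hw₀ i)
  calc ∑' i, w i * a i ≤ ∑' i, w i * √(c i) :=
        Summable.tsum_le_tsum hterm
          (hsum_sqrt.of_nonneg_of_le (fun i ↦ mul_nonneg (hw₀ i) (ha₀ i)) hterm) hsum_sqrt
    _ ≤ √(∑' i, w i) * √(∑' i, w i * c i) := hCS
    _ = √(∑' i, w i * c i) := by rw [hw.tsum_eq, Real.sqrt_one, one_mul]

theorem tsum_mul_sub_le_of_antitone {w b : ℕ → ℝ} (hw : Antitone w) (hw₀ : ∀ q, 0 ≤ w q)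
    (hw_sum : Summable w) (hb : ∀ q, b q ∈ Set.Icc 0 1) :
    ∑' q, w q * (b (q + 1) - b q) ≤ w 0 := by
  have hsum : Summable fun q ↦ w q * (b (q + 1) - b q) := by
    refine hw_sum.of_norm_bounded fun q ↦ ?_
    rw [Real.norm_eq_abs, abs_mul, abs_of_nonneg (hw₀ q)]
    refine mul_le_of_le_one_right (hw₀ q) (abs_le.mpr ⟨?_, ?_⟩) <;>
      linarith [(hb q).1, (hb q).2, (hb (q + 1)).1, (hb (q + 1)).2]
  -- Abel summation: the partial sums stay below `w 0 - w N * (1 - b N)`.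
  have hpartial : ∀ N, ∑ q ∈ Finset.range N, w q * (b (q + 1) - b q) ≤ w 0 - w N * (1 - b N) := by
    intro N
    induction N with
    | zero =>
      simp only [Finset.range_zero, Finset.sum_empty]
      nlinarith [mul_nonneg (hw₀ 0) (hb 0).1]
    | succ N ih =>
      rw [Finset.sum_range_succ]
      nlinarith [hw N.le_succ, (hb (N + 1)).2]
  refine hsum.tsum_le_of_sum_range_le fun N ↦ (hpartial N).trans ?_
  linarith [mul_nonneg (hw₀ N) (sub_nonneg.mpr (hb N).2)]

theorem hasSum_mul_geometric_one_sub {lam : ℝ} (hlam : lam ∈ Set.Ioc 0 1) :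
    HasSum (fun q : ℕ ↦ lam * (1 - lam) ^ q) 1 := by
  have h := (hasSum_geometric_of_lt_one (r := 1 - lam) (by linarith [hlam.2])
    (by linarith [hlam.1])).mul_left lam
  rwa [sub_sub_cancel, mul_inv_cancel₀ hlam.1.ne'] at h

theorem tsum_mul_geometric_one_sub_mul_sub_le {lam : ℝ} (hlam : lam ∈ Set.Ioc 0 1) {b : ℕ → ℝ}
    (hb : ∀ q, b q ∈ Set.Icc 0 1) :
    ∑' q : ℕ, lam * (1 - lam) ^ q * (b (q + 1) - b q) ≤ lam := by
  have h1lam : 0 ≤ 1 - lam := by linarith [hlam.2]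
  simpa using tsum_mul_sub_le_of_antitone
    ((pow_right_anti₀ h1lam (by linarith [hlam.1])).const_mul hlam.1.le)
    (fun q ↦ mul_nonneg hlam.1.le (pow_nonneg h1lam q))
    (hasSum_mul_geometric_one_sub hlam).summable hb

theorem stmt_10_general {Ω : Type*} [m0 : MeasurableSpace Ω]
    (μ : Measure Ω) [IsProbabilityMeasure μ]
    (lam C : ℝ) (n : ℕ) (hlam : lam ∈ Set.Ioc (0 : ℝ) 1)
    (p phat : ℕ → Ω → ℝ)
    (hp : ∀ q, Measurable (p q)) (hphat : ∀ q, Measurable (phat q))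
    (hp01 : ∀ q, ∀ᵐ ω ∂μ, p q ω ∈ Set.Icc (0 : ℝ) 1)
    (hphat01 : ∀ q, ∀ᵐ ω ∂μ, phat q ω ∈ Set.Icc (0 : ℝ) 1)
    (hmart : ∀ q,
      μ[p q | MeasurableSpace.comap (phat q) inferInstance] =ᵐ[μ] phat q)
    (htel : (∑' q : ℕ, lam * (1 - lam) ^ q * ∫ ω, ((p q ω) ^ 2 - (phat q ω) ^ 2) ∂μ)
        ≤ (∑' q : ℕ, lam * (1 - lam) ^ q *
              ∫ ω, ((phat (q + 1) ω) ^ 2 - (phat q ω) ^ 2) ∂μ) + 2 * C / n) :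
    (∑' q : ℕ, lam * (1 - lam) ^ q * ∫ ω, |p q ω - phat q ω| ∂μ)
      ≤ Real.sqrt (lam + 2 * C / n) := by
  have hp_L2 q : MemLp (p q) 2 μ := memLp_of_ae_mem_Icc_zero_one (hp q) (hp01 q) 2
  have hphat_L2 q : MemLp (phat q) 2 μ := memLp_of_ae_mem_Icc_zero_one (hphat q) (hphat01 q) 2
  have hsq_sub_sq q : ∫ ω, ((p q ω) ^ 2 - (phat q ω) ^ 2) ∂μ = ∫ ω, (p q ω - phat q ω) ^ 2 ∂μ :=
    integral_sq_sub_sq_of_condExp_ae_eq (hphat q).comap_le (hp_L2 q) (hmart q)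
  have hsq_dist_mem q : ∫ ω, (p q ω - phat q ω) ^ 2 ∂μ ∈ Set.Icc 0 1 := by
    refine integral_mem_Icc_zero_one ?_
    filter_upwards [hp01 q, hphat01 q] with ω h h'
    constructor <;> nlinarith [h.1, h.2, h'.1, h'.2]
  have hphat_sq_sub q : ∫ ω, ((phat (q + 1) ω) ^ 2 - (phat q ω) ^ 2) ∂μ
      = ∫ ω, (phat (q + 1) ω) ^ 2 ∂μ - ∫ ω, (phat q ω) ^ 2 ∂μ :=
    integral_sub (hphat_L2 (q + 1)).integrable_sq (hphat_L2 q).integrable_sq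
  have hphat_sq_mem q : ∫ ω, (phat q ω) ^ 2 ∂μ ∈ Set.Icc 0 1 := integral_mem_Icc_zero_one <|
    (hphat01 q).mono fun ω h ↦ ⟨sq_nonneg _, pow_le_one₀ h.1 h.2⟩
  calc ∑' q, lam * (1 - lam) ^ q * ∫ ω, |p q ω - phat q ω| ∂μ
      ≤ √(∑' q, lam * (1 - lam) ^ q * ∫ ω, ((p q ω) ^ 2 - (phat q ω) ^ 2) ∂μ) :=
        tsum_mul_le_sqrt_tsum_mul
          (fun q ↦ mul_nonneg hlam.1.le (pow_nonneg (by linarith [hlam.2]) q))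
          (hasSum_mul_geometric_one_sub hlam) (fun q ↦ integral_nonneg fun _ ↦ abs_nonneg _)
          (fun q ↦ hsq_sub_sq q ▸ integral_abs_le_sqrt_integral_sq ((hp_L2 q).sub (hphat_L2 q)))
          (fun q ↦ hsq_sub_sq q ▸ hsq_dist_mem q)
    _ ≤ √(lam + 2 * C / n) := by
      refine Real.sqrt_le_sqrt (htel.trans (add_le_add_left ?_ _))
      simpa only [hphat_sq_sub] using tsum_mul_geometric_one_sub_mul_sub_le hlam hphat_sq_mem

/-- the discounted-sum estimate. If `p_q, p̂_q` are `[0,1]`-valued with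
`E[p_q | p̂_q] = p̂_q`, `E[p_q² − p̂_q²] ≥ 0` and the telescoping bound holds, then
`∑ λ(1−λ)^q E|p_q − p̂_q| ≤ (λ + 2C/n)^{1/2}`. -/
theorem stmt_10 {Ω : Type*} [m0 : MeasurableSpace Ω]
    (μ : Measure Ω) [IsProbabilityMeasure μ]
    (lam C : ℝ) (n : ℕ) (hlam : lam ∈ Set.Ioc (0 : ℝ) 1) (hC : 0 < C) (hn : 1 ≤ n)
    (p phat : ℕ → Ω → ℝ)
    (hp : ∀ q, Measurable (p q)) (hphat : ∀ q, Measurable (phat q))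
    (hp01 : ∀ q, ∀ᵐ ω ∂μ, p q ω ∈ Set.Icc (0 : ℝ) 1)
    (hphat01 : ∀ q, ∀ᵐ ω ∂μ, phat q ω ∈ Set.Icc (0 : ℝ) 1)
    (hmart : ∀ q,
      μ[p q | MeasurableSpace.comap (phat q) inferInstance] =ᵐ[μ] phat q)
    (hpos : ∀ q, 0 ≤ ∫ ω, ((p q ω) ^ 2 - (phat q ω) ^ 2) ∂μ)
    (htel : (∑' q : ℕ, lam * (1 - lam) ^ q * ∫ ω, ((p q ω) ^ 2 - (phat q ω) ^ 2) ∂μ)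
        ≤ (∑' q : ℕ, lam * (1 - lam) ^ q *
              ∫ ω, ((phat (q + 1) ω) ^ 2 - (phat q ω) ^ 2) ∂μ) + 2 * C / n) :
    (∑' q : ℕ, lam * (1 - lam) ^ q * ∫ ω, |p q ω - phat q ω| ∂μ)
      ≤ Real.sqrt (lam + 2 * C / n) :=
  stmt_10_general (m0 := m0) μ lam C n hlam p phat hp hphat hp01 hphat01 hmart htel
end

section
/- Let K be a finite set, p, p₁, p₂ ∈ Δ(K) and λ ∈ [0,1] with p = λp₁ + (1−λ)p₂. For any sequence p^n → p in Δ(K), there exist sequences p₁^n → p₁ and p₂^n → p₂ in Δ(K) such that p^n = λp₁^n + (1−λ)p₂^n for all n. -/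
open Filter

/-- if `p = λ p₁ + (1−λ) p₂` in `Δ(K)` and `p^n → p` in `Δ(K)`, then there are
sequences `p₁^n → p₁`, `p₂^n → p₂` in `Δ(K)` with `p^n = λ p₁^n + (1−λ) p₂^n` for all `n`. -/
theorem stmt_13 {K : Type*} [Fintype K]
    (t : ℝ) (ht : t ∈ Set.Icc (0 : ℝ) 1)
    (p p₁ p₂ : K → ℝ)
    (hp : p ∈ stdSimplex ℝ K) (hp₁ : p₁ ∈ stdSimplex ℝ K) (hp₂ : p₂ ∈ stdSimplex ℝ K)
    (hsplit : p = t • p₁ + (1 - t) • p₂)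
    (pn : ℕ → K → ℝ) (hpn : ∀ n, pn n ∈ stdSimplex ℝ K)
    (hconv : Tendsto pn atTop (nhds p)) :
    ∃ (p1n p2n : ℕ → K → ℝ),
      (∀ n, p1n n ∈ stdSimplex ℝ K) ∧ (∀ n, p2n n ∈ stdSimplex ℝ K) ∧
      Tendsto p1n atTop (nhds p₁) ∧ Tendsto p2n atTop (nhds p₂) ∧
      ∀ n, pn n = t • p1n n + (1 - t) • p2n n := by
  classical
  -- the set of positive coordinates of p is nonempty
  have hSne : (Finset.univ.filter (fun k => 0 < p k)).Nonempty := by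
    by_contra h
    rw [Finset.not_nonempty_iff_eq_empty, Finset.filter_eq_empty_iff] at h
    have : ∑ k, p k = 0 := by
      apply Finset.sum_eq_zero
      intro k _
      exact le_antisymm (not_lt.1 (h (Finset.mem_univ k))) (hp.1 k)
    rw [hp.2] at this; norm_num at this
  set m : ℝ := (Finset.univ.filter (fun k => 0 < p k)).inf' hSne p with hm_def
  have hm_pos : 0 < m := by
    rw [hm_def, Finset.lt_inf'_iff]
    intro k hk
    exact (Finset.mem_filter.1 hk).2
  have hm_le : ∀ k, 0 < p k → m ≤ p k := by
    intro k hk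
    exact Finset.inf'_le _ (Finset.mem_filter.2 ⟨Finset.mem_univ k, hk⟩)
  set ε : ℕ → ℝ := fun n => min 1 (‖pn n - p‖ / m) with hε_def
  have hε0 : ∀ n, 0 ≤ ε n := fun n =>
    le_min zero_le_one (div_nonneg (norm_nonneg _) hm_pos.le)
  have hε1 : ∀ n, ε n ≤ 1 := fun n => min_le_left _ _
  -- key pointwise bound
  have key : ∀ n k, (1 - ε n) * p k ≤ pn n k := by
    intro n k
    rcases eq_or_lt_of_le (hp.1 k) with h0 | h0
    · rw [← h0, mul_zero]; exact (hpn n).1 k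
    · rcases le_or_gt (‖pn n - p‖ / m) 1 with hc | hc
      · have hεeq : ε n = ‖pn n - p‖ / m := min_eq_right hc
        set d : ℝ := ‖pn n - p‖ with hd
        have hd0 : 0 ≤ d := norm_nonneg _
        have h1 : p k - pn n k ≤ d := by
          have := norm_le_pi_norm (pn n - p) k
          rw [Pi.sub_apply, Real.norm_eq_abs] at this
          have := abs_le.1 this
          linarith [this.1]
        have h2 : m ≤ p k := hm_le k h0
        have h3 : d ≤ d / m * p k := by
          rw [div_mul_eq_mul_div, le_div_iff₀ hm_pos]
          nlinarith
        rw [hεeq]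
        nlinarith
      · have hεeq : ε n = 1 := min_eq_left hc.le
        rw [hεeq]
        simpa using (hpn n).1 k
  -- sum of the correction term
  have hsum : ∀ n, ∑ k, (pn n k - (1 - ε n) * p k) = ε n := by
    intro n
    rw [Finset.sum_sub_distrib, (hpn n).2, ← Finset.mul_sum, hp.2]
    ring
  refine ⟨fun n => (1 - ε n) • p₁ + (pn n - (1 - ε n) • p),
          fun n => (1 - ε n) • p₂ + (pn n - (1 - ε n) • p), ?_, ?_, ?_, ?_, ?_⟩
  · intro n
    constructor
    · intro k
      simp only [Pi.add_apply, Pi.sub_apply, Pi.smul_apply, smul_eq_mul]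
      have := key n k
      have := hp₁.1 k
      have := hε1 n
      nlinarith
    · simp only [Pi.add_apply, Pi.sub_apply, Pi.smul_apply, smul_eq_mul]
      rw [Finset.sum_add_distrib, hsum n, ← Finset.mul_sum, hp₁.2]
      ring
  · intro n
    constructor
    · intro k
      simp only [Pi.add_apply, Pi.sub_apply, Pi.smul_apply, smul_eq_mul]
      have := key n k
      have := hp₂.1 k
      have := hε1 n
      nlinarith
    · simp only [Pi.add_apply, Pi.sub_apply, Pi.smul_apply, smul_eq_mul]
      rw [Finset.sum_add_distrib, hsum n, ← Finset.mul_sum, hp₂.2]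
      ring
  · -- convergence to p₁
    have hεlim : Tendsto ε atTop (nhds 0) := by
      have hnorm : Tendsto (fun n => ‖pn n - p‖) atTop (nhds 0) := by
        have := (hconv.sub (tendsto_const_nhds : Tendsto (fun _ : ℕ => p) atTop (nhds p))).norm
        simpa using this
      have := (tendsto_const_nhds : Tendsto (fun _ : ℕ => (1:ℝ)) atTop (nhds 1)).min
        (hnorm.div_const m)
      simpa [min_eq_right (zero_le_one : (0:ℝ) ≤ 1)] using this
    have h1 : Tendsto (fun n => (1 - ε n)) atTop (nhds 1) := by
      have := (tendsto_const_nhds : Tendsto (fun _ : ℕ => (1:ℝ)) atTop (nhds 1)).sub hεlim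
      simpa using this
    have hs1 : Tendsto (fun n => (1 - ε n) • p₁) atTop (nhds p₁) := by
      have := h1.smul (tendsto_const_nhds : Tendsto (fun _ : ℕ => p₁) atTop (nhds p₁))
      simpa using this
    have hs2 : Tendsto (fun n => pn n - (1 - ε n) • p) atTop (nhds 0) := by
      have hsp : Tendsto (fun n => (1 - ε n) • p) atTop (nhds p) := by
        have := h1.smul (tendsto_const_nhds : Tendsto (fun _ : ℕ => p) atTop (nhds p))
        simpa using this
      have := hconv.sub hsp
      simpa using this
    have := hs1.add hs2
    simpa using this
  · -- convergence to p₂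
    have hεlim : Tendsto ε atTop (nhds 0) := by
      have hnorm : Tendsto (fun n => ‖pn n - p‖) atTop (nhds 0) := by
        have := (hconv.sub (tendsto_const_nhds : Tendsto (fun _ : ℕ => p) atTop (nhds p))).norm
        simpa using this
      have := (tendsto_const_nhds : Tendsto (fun _ : ℕ => (1:ℝ)) atTop (nhds 1)).min
        (hnorm.div_const m)
      simpa [min_eq_right (zero_le_one : (0:ℝ) ≤ 1)] using this
    have h1 : Tendsto (fun n => (1 - ε n)) atTop (nhds 1) := by
      have := (tendsto_const_nhds : Tendsto (fun _ : ℕ => (1:ℝ)) atTop (nhds 1)).sub hεlim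
      simpa using this
    have hs1 : Tendsto (fun n => (1 - ε n) • p₂) atTop (nhds p₂) := by
      have := h1.smul (tendsto_const_nhds : Tendsto (fun _ : ℕ => p₂) atTop (nhds p₂))
      simpa using this
    have hs2 : Tendsto (fun n => pn n - (1 - ε n) • p) atTop (nhds 0) := by
      have hsp : Tendsto (fun n => (1 - ε n) • p) atTop (nhds p) := by
        have := h1.smul (tendsto_const_nhds : Tendsto (fun _ : ℕ => p) atTop (nhds p))
        simpa using this
      have := hconv.sub hsp
      simpa using this
    have := hs1.add hs2
    simpa using this
  · intro n
    funext k
    have hk : p k = t * p₁ k + (1 - t) * p₂ k := by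
      have := congrFun hsplit k
      simpa using this
    simp only [Pi.add_apply, Pi.sub_apply, Pi.smul_apply, smul_eq_mul]
    linear_combination (1 - ε n) * hk
end

section
/- Let w : Δ(K) × ℝ → ℝ be bounded and concave in its first variable, and for δ > 0 define the inf-convolution w_δ(z) := min_{z' ∈ Δ(K)×ℝ} { w(z') + |z − z'|²/(2δ) } on ℝ^{K+1}. Suppose w_δ has a second-order Taylor expansion at a point z₀ = (p₀, y₀), and let z'' = (p'', y'') ∈ Δ(K)×ℝ attain the minimum at z₀. Then for every direction m in the tangent space T_{Δ(K)}(p''), the quadratic form of the Hessian of w_δ in the p-variable at z₀ satisfies ⟨m, D²_p w_δ(z₀) m⟩ ≤ 0. -/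
/-!
Moving the minimiser `z''` together with `z₀` along `±t (m, 0)` gives
`w_δ(z₀ ± t (m, 0)) ≤ w(z'' ± t (m, 0)) + |z₀ - z''|² / (2δ)`, and concavity of `w` in `p`
turns the sum of the two into `w_δ(z₀ + t (m, 0)) + w_δ(z₀ - t (m, 0)) ≤ 2 w_δ(z₀)` for small `t`.
By the Taylor expansion this symmetric second difference equals `t² Q((m, 0), (m, 0)) + o(t²)`.
-/

open Filter Asymptotics Topology

theorem Convex.add_smul_mem_of_abs_le {E : Type*} [AddCommGroup E] [Module ℝ E] {s : Set E}
    (hs : Convex ℝ s) {x v : E} {ε t : ℝ} (hε : 0 < ε) (hplus : x + ε • v ∈ s)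
    (hminus : x - ε • v ∈ s) (ht : |t| ≤ ε) : x + t • v ∈ s := by
  obtain ⟨hlo, hhi⟩ := abs_le.1 ht
  have hcomb : ((ε + t) / (2 * ε)) • (x + ε • v) + ((ε - t) / (2 * ε)) • (x - ε • v)
      = x + t • v := by
    match_scalars <;> field_simp <;> ring
  rw [← hcomb]
  exact hs hplus hminus (div_nonneg (by linarith) (by positivity))
    (div_nonneg (by linarith) (by positivity)) (by field_simp; ring)

theorem ConcaveOn.add_map_add_sub_le {E : Type*} [AddCommGroup E] [Module ℝ E] {s : Set E}
    {f : E → ℝ} (hf : ConcaveOn ℝ s f) {x v : E} (hplus : x + v ∈ s) (hminus : x - v ∈ s) :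
    f (x + v) + f (x - v) ≤ 2 * f x := by
  have hmid := hf.2 hplus hminus (by norm_num : (0 : ℝ) ≤ 1 / 2) (by norm_num : (0 : ℝ) ≤ 1 / 2)
    (by norm_num)
  rw [show (1 / 2 : ℝ) • (x + v) + (1 / 2 : ℝ) • (x - v) = x by module, smul_eq_mul,
    smul_eq_mul] at hmid
  linarith

theorem sInf_image_add_sq_div_le {E : Type*} [SeminormedAddCommGroup E] {S : Set E} {w : E → ℝ}
    {δ : ℝ} (hδ : 0 ≤ δ) (hw : BddBelow (w '' S)) {z z' v : E} (hz' : z' + v ∈ S) :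
    sInf ((fun y => w y + ‖z + v - y‖ ^ 2 / (2 * δ)) '' S) ≤ w (z' + v) + ‖z - z'‖ ^ 2 / (2 * δ) := by
  obtain ⟨M, hM⟩ := hw
  have hbdd : BddBelow ((fun y => w y + ‖z + v - y‖ ^ 2 / (2 * δ)) '' S) := by
    refine ⟨M, ?_⟩
    rintro _ ⟨y, hy, rfl⟩
    have hwy := hM ⟨y, hy, rfl⟩
    have hsq : 0 ≤ ‖z + v - y‖ ^ 2 / (2 * δ) := by positivity
    linarith
  simpa using csInf_le hbdd ⟨_, hz', rfl⟩

theorem isLittleO_sq_along_line {E F : Type*} [NormedAddCommGroup E] [NormedSpace ℝ E] [Norm F]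
    {R : E → F} {x₀ : E} (hR : R =o[𝓝 x₀] fun x => ‖x - x₀‖ ^ 2) (v : E) :
    (fun t : ℝ => R (x₀ + t • v)) =o[𝓝 0] fun t => t ^ 2 := by
  have hline : Tendsto (fun t : ℝ => x₀ + t • v) (𝓝 0) (𝓝 x₀) :=
    (by fun_prop : Continuous fun t : ℝ => x₀ + t • v).tendsto' 0 x₀ (by simp)
  refine (hR.comp_tendsto hline).trans_isBigO (IsBigO.of_bound (‖v‖ ^ 2) ?_)
  filter_upwards with t
  simp [norm_smul, mul_pow, mul_comm]

theorem le_zero_of_mul_sq_le_isLittleO {c : ℝ} {φ : ℝ → ℝ} (hφ : φ =o[𝓝 0] fun t => t ^ 2)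
    (h : ∀ᶠ t in 𝓝 0, c * t ^ 2 ≤ φ t) : c ≤ 0 := by
  refine ge_of_tendsto (hφ.mono (nhdsWithin_le_nhds (s := {0}ᶜ))).tendsto_div_nhds_zero ?_
  filter_upwards [nhdsWithin_le_nhds h, self_mem_nhdsWithin] with t ht ht0
  rwa [le_div_iff₀ (pow_two_pos_of_ne_zero ht0)]

theorem quadForm_nonpos_of_secondDiff_nonpos {E : Type*} [NormedAddCommGroup E] [NormedSpace ℝ E]
    {f : E → ℝ} {x₀ : E} {D : E →ₗ[ℝ] ℝ} {Q : E →ₗ[ℝ] E →ₗ[ℝ] ℝ}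
    (hf : (fun x => f x - f x₀ - D (x - x₀) - (1 / 2) * Q (x - x₀) (x - x₀))
      =o[𝓝 x₀] fun x => ‖x - x₀‖ ^ 2)
    (u : E) (h : ∀ᶠ t in 𝓝 (0 : ℝ), f (x₀ + t • u) + f (x₀ - t • u) ≤ 2 * f x₀) :
    Q u u ≤ 0 := by
  refine le_zero_of_mul_sq_le_isLittleO
    ((isLittleO_sq_along_line hf u).add (isLittleO_sq_along_line hf (-u))).neg_left ?_
  filter_upwards [h] with t ht
  simp only [smul_neg, ← sub_eq_add_neg, add_sub_cancel_left, sub_sub_cancel_left, map_neg,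
    LinearMap.neg_apply, map_smul, LinearMap.smul_apply, smul_eq_mul]
  linarith

theorem stmt_14_general {K : Type*} [Fintype K]
    (δ : ℝ) (hδ : 0 < δ)
    (w : (K → ℝ) × ℝ → ℝ) (M : ℝ)
    (hwb : ∀ z ∈ (stdSimplex ℝ K) ×ˢ (Set.univ : Set ℝ), |w z| ≤ M)
    (hconc : ∀ y : ℝ, ConcaveOn ℝ (stdSimplex ℝ K) (fun p => w (p, y)))
    (wδ : (K → ℝ) × ℝ → ℝ)
    (hwδ : ∀ z : (K → ℝ) × ℝ,
      wδ z = sInf ((fun z' => w z' + ‖z - z'‖ ^ 2 / (2 * δ)) ''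
        ((stdSimplex ℝ K) ×ˢ (Set.univ : Set ℝ))))
    (z₀ z'' : (K → ℝ) × ℝ)
    (hattain : wδ z₀ = w z'' + ‖z₀ - z''‖ ^ 2 / (2 * δ))
    (D : ((K → ℝ) × ℝ) →ₗ[ℝ] ℝ)
    (Q : ((K → ℝ) × ℝ) →ₗ[ℝ] ((K → ℝ) × ℝ) →ₗ[ℝ] ℝ)
    (hTaylor : (fun z => wδ z - wδ z₀ - D (z - z₀) - (1 / 2) * Q (z - z₀) (z - z₀))
        =o[nhds z₀] (fun z => ‖z - z₀‖ ^ 2)) :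
    ∀ m : K → ℝ,
      (∃ ε > (0 : ℝ), z''.1 + ε • m ∈ stdSimplex ℝ K ∧ z''.1 - ε • m ∈ stdSimplex ℝ K) →
      Q (m, 0) (m, 0) ≤ 0 := by
  rintro m ⟨ε, hε, hplus, hminus⟩
  obtain ⟨p'', y''⟩ := z''
  have hmem : ∀ t, |t| ≤ ε → p'' + t • m ∈ stdSimplex ℝ K := fun t ht =>
    (convex_stdSimplex ℝ K).add_smul_mem_of_abs_le hε hplus hminus ht
  have hbdd : BddBelow (w '' (stdSimplex ℝ K ×ˢ Set.univ)) :=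
    ⟨-M, by rintro _ ⟨z, hz, rfl⟩; exact neg_le_of_abs_le (hwb z hz)⟩
  have hshift : ∀ t, |t| ≤ ε →
      wδ (z₀ + t • (m, 0)) ≤ w (p'' + t • m, y'') + ‖z₀ - (p'', y'')‖ ^ 2 / (2 * δ) := by
    intro t ht
    have hpt : ((p'', y'') : (K → ℝ) × ℝ) + t • (m, 0) = (p'' + t • m, y'') := by
      ext <;> simp
    have hS : (p'', y'') + t • (m, 0) ∈ stdSimplex ℝ K ×ˢ Set.univ := by
      rw [hpt]; exact ⟨hmem t ht, trivial⟩
    rw [hwδ, ← hpt]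
    exact sInf_image_add_sq_div_le hδ.le hbdd hS
  refine quadForm_nonpos_of_secondDiff_nonpos hTaylor (m, 0) ?_
  filter_upwards [Metric.closedBall_mem_nhds (0 : ℝ) hε] with t ht
  rw [Metric.mem_closedBall, Real.dist_0_eq_abs] at ht
  have ht' : |-t| ≤ ε := by rwa [abs_neg]
  have hminus_t := hmem (-t) ht'
  have hshift_neg := hshift (-t) ht'
  simp only [neg_smul, ← sub_eq_add_neg] at hminus_t hshift_neg
  have hconcave := (hconc y'').add_map_add_sub_le (hmem t ht) hminus_t
  linarith [hshift t ht]

/-- if `w` is bounded on `Δ(K) × ℝ` and concave in `p`, `w_δ` is its quadratic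
inf-convolution, `z''` attains the minimum defining `w_δ(z₀)`, and `w_δ` has a second-order
Taylor expansion at `z₀` with symmetric Hessian form `Q`, then `⟨m, D²_p w_δ(z₀) m⟩ ≤ 0`
for every tangent direction `m ∈ T_{Δ(K)}(p'')`. -/
theorem stmt_14 {K : Type*} [Fintype K] [Nonempty K]
    (δ : ℝ) (hδ : 0 < δ)
    (w : (K → ℝ) × ℝ → ℝ) (M : ℝ)
    (hwb : ∀ z ∈ (stdSimplex ℝ K) ×ˢ (Set.univ : Set ℝ), |w z| ≤ M)
    (hconc : ∀ y : ℝ, ConcaveOn ℝ (stdSimplex ℝ K) (fun p => w (p, y)))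
    (wδ : (K → ℝ) × ℝ → ℝ)
    (hwδ : ∀ z : (K → ℝ) × ℝ,
      wδ z = sInf ((fun z' => w z' + ‖z - z'‖ ^ 2 / (2 * δ)) ''
        ((stdSimplex ℝ K) ×ˢ (Set.univ : Set ℝ))))
    (z₀ z'' : (K → ℝ) × ℝ)
    (hz'' : z'' ∈ (stdSimplex ℝ K) ×ˢ (Set.univ : Set ℝ))
    (hattain : wδ z₀ = w z'' + ‖z₀ - z''‖ ^ 2 / (2 * δ))
    (D : ((K → ℝ) × ℝ) →ₗ[ℝ] ℝ)
    (Q : ((K → ℝ) × ℝ) →ₗ[ℝ] ((K → ℝ) × ℝ) →ₗ[ℝ] ℝ)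
    (hQsymm : ∀ a b, Q a b = Q b a)
    (hTaylor : (fun z => wδ z - wδ z₀ - D (z - z₀) - (1 / 2) * Q (z - z₀) (z - z₀))
        =o[nhds z₀] (fun z => ‖z - z₀‖ ^ 2)) :
    ∀ m : K → ℝ,
      (∃ ε > (0 : ℝ), z''.1 + ε • m ∈ stdSimplex ℝ K ∧ z''.1 - ε • m ∈ stdSimplex ℝ K) →
      Q (m, 0) (m, 0) ≤ 0 :=
  stmt_14_general δ hδ w M hwb hconc wδ hwδ z₀ z'' hattain D Q hTaylor
end

section
/- Let ξ be a random variable with ℙ(ξ=1)=λ, ℙ(ξ=2)=1−λ, independent of two independent pairs of processes (Z¹,π¹) and (Z²,π²) where, for i=1,2 and all t, π^i_t(k) = ℙ(X^i_t = k | ℱ^{(Y^i,π^i)}_t). Define (Z,π) to equal (Z^i, π^i) on the event {ξ=i}. Then for all t and k, π_t(k) = ℙ(X_t = k | ℱ^{(Y,π)}_t), where ℱ^{(Y,π)}_t is the natural filtration of (Y,π) and Z = (X,Y). -/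
open MeasureTheory ProbabilityTheory

/-! On the event `{ξ = i}` the mixed observation `(Y, π)` coincides with `(Yⁱ, πⁱ)`, so every
event `A` of `ℱ^{(Y,π)}_t` agrees on `{ξ = i}` with an event `Aⁱ` of `ℱ^{(Yⁱ,πⁱ)}_t`. As `ξ` is
independent of both processes,
`∫_{A ∩ {ξ = i}} πⁱ_t(k) = ℙ(ξ = i) ∫_{Aⁱ} πⁱ_t(k) = ℙ(ξ = i) ℙ(Aⁱ ∩ {Xⁱ_t = k})
  = ℙ(A ∩ {ξ = i} ∩ {X_t = k})`,
and summing over `i` gives the defining property of `ℙ(X_t = k | ℱ^{(Y,π)}_t)`. -/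

section Select

variable {Ω ι : Type*} {ξ : Ω → ι}

lemma select_eq_sum_indicator [Fintype ι] {E : Type*} [AddCommMonoid E] (g : ι → Ω → E) :
    (fun ω => g (ξ ω) ω) = fun ω => ∑ i, (ξ ⁻¹' {i}).indicator (g i) ω := by
  classical
  ext ω
  simp [Set.indicator_apply]

variable {mΩ : MeasurableSpace Ω} [MeasurableSpace ι] [MeasurableSingletonClass ι]

lemma measurable_select [Countable ι] {β : Type*} [MeasurableSpace β] {g : ι → Ω → β}
    (hξ : Measurable ξ) (hg : ∀ i, Measurable (g i)) :
    Measurable fun ω => g (ξ ω) ω :=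
  (measurable_from_prod_countable_right (f := fun p : ι × Ω => g p.1 p.2) hg).comp
    (hξ.prodMk measurable_id)

variable [Fintype ι] {μ : Measure Ω} {g : ι → Ω → ℝ}

lemma integrable_select (hξ : Measurable ξ) (hg : ∀ i, Integrable (g i) μ) :
    Integrable (fun ω => g (ξ ω) ω) μ := by
  rw [select_eq_sum_indicator]
  exact integrable_finsetSum _ fun i _ => (hg i).indicator (hξ (measurableSet_singleton i))

lemma setIntegral_select (hξ : Measurable ξ) (hg : ∀ i, Integrable (g i) μ) (A : Set Ω) :
    ∫ ω in A, g (ξ ω) ω ∂μ = ∑ i, ∫ ω in A ∩ ξ ⁻¹' {i}, g i ω ∂μ := by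
  rw [select_eq_sum_indicator g, integral_finsetSum _ fun i _ =>
    ((hg i).indicator (hξ (measurableSet_singleton i))).integrableOn]
  exact Finset.sum_congr rfl fun i _ => setIntegral_indicator (hξ (measurableSet_singleton i))

end Select

section Independence

variable {Ω : Type*} {m₁ m₂ G m mΩ : MeasurableSpace Ω} {μ : Measure Ω}

lemma ProbabilityTheory.Indep.setIntegral_inter_eq_mul (hm₁ : m₁ ≤ mΩ) (hm₂ : m₂ ≤ mΩ)
    (hind : Indep m₁ m₂ μ) {A B : Set Ω} {h : Ω → ℝ} (hA : MeasurableSet[m₂] A)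
    (hB : MeasurableSet[m₁] B) (hh : Measurable[m₂] h) :
    ∫ ω in A ∩ B, h ω ∂μ = μ.real B * ∫ ω in A, h ω ∂μ := by
  have hAh : Measurable[m₂] (A.indicator h) := hh.indicator hA
  rw [Set.inter_comm, ← setIntegral_indicator (hm₂ A hA), ← integral_indicator (hm₂ A hA)]
  exact (indep_of_indep_of_le_right hind hAh.comap_le).setIntegral_eq_mul (f := id) hm₁
    (hAh.mono hm₂ le_rfl).aemeasurable hB aestronglyMeasurable_id

variable [IsFiniteMeasure μ] {f g : Ω → ℝ}

lemma setIntegral_inter_eq_of_indep_of_ae_eq_condExp (hm₁ : m₁ ≤ mΩ) (hG : G ≤ mΩ)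
    (hmG : m ≤ G) (hind : Indep m₁ G μ) (hf : Measurable[G] f) (hg : Measurable[G] g)
    (hgint : Integrable g μ) (hcond : f =ᵐ[μ] μ[g | m]) {A B : Set Ω}
    (hA : MeasurableSet[m] A) (hB : MeasurableSet[m₁] B) :
    ∫ ω in A ∩ B, f ω ∂μ = ∫ ω in A ∩ B, g ω ∂μ := by
  rw [hind.setIntegral_inter_eq_mul hm₁ hG (hmG A hA) hB hf,
    hind.setIntegral_inter_eq_mul hm₁ hG (hmG A hA) hB hg,
    integral_congr_ae (ae_restrict_of_ae hcond), setIntegral_condExp (hmG.trans hG) hgint hA]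

end Independence

section Mixture

variable {Ω ι : Type*} [MeasurableSpace ι] [MeasurableSingletonClass ι] [Fintype ι]
  {G mmix mΩ : MeasurableSpace Ω} {μ : Measure Ω} [IsFiniteMeasure μ] {ξ : Ω → ι}

theorem ae_eq_condExp_select (hξ : Measurable ξ) {m : ι → MeasurableSpace Ω} (hG : G ≤ mΩ)
    (hmG : ∀ i, m i ≤ G) (hmix : mmix ≤ mΩ)
    (hind : Indep (MeasurableSpace.comap ξ inferInstance) G μ)
    (htrace : ∀ i A, MeasurableSet[mmix] A →
      ∃ A', MeasurableSet[m i] A' ∧ A ∩ ξ ⁻¹' {i} = A' ∩ ξ ⁻¹' {i})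
    {f g : ι → Ω → ℝ} (hf : ∀ i, Measurable[G] (f i)) (hg : ∀ i, Measurable[G] (g i))
    (hgint : ∀ i, Integrable (g i) μ) (hcond : ∀ i, f i =ᵐ[μ] μ[g i | m i])
    (hfmix : AEStronglyMeasurable[mmix] (fun ω => f (ξ ω) ω) μ) :
    (fun ω => f (ξ ω) ω) =ᵐ[μ] μ[fun ω => g (ξ ω) ω | mmix] := by
  have hfint : ∀ i, Integrable (f i) μ := fun i => integrable_condExp.congr (hcond i).symm
  refine ae_eq_condExp_of_forall_setIntegral_eq hmix (integrable_select hξ hgint)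
    (fun _ _ _ => (integrable_select hξ hfint).integrableOn) (fun A hA _ => ?_) hfmix
  rw [setIntegral_select hξ hfint, setIntegral_select hξ hgint]
  refine Finset.sum_congr rfl fun i _ => ?_
  obtain ⟨A', hA', hAA'⟩ := htrace i A hA
  rw [hAA']
  exact setIntegral_inter_eq_of_indep_of_ae_eq_condExp hξ.comap_le hG (hmG i) hind (hf i) (hg i)
    (hgint i) (hcond i) hA' ⟨{i}, measurableSet_singleton i, rfl⟩

end Mixture

section NaturalFiltration

variable {Ω τ β : Type*} [MeasurableSpace β] {I : Set τ}

lemma measurable_iSup₂_comap {W : τ → Ω → β} {s : τ} (hs : s ∈ I) :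
    Measurable[⨆ s ∈ I, MeasurableSpace.comap (W s) inferInstance] (W s) :=
  Measurable.of_comap_le (le_iSup₂ (f := fun s (_ : s ∈ I) => MeasurableSpace.comap (W s) _) s hs)

lemma exists_inter_eq_of_measurableSet_iSup_comap {W W' : τ → Ω → β} {E : Set Ω}
    (hWW' : ∀ s, ∀ ω ∈ E, W s ω = W' s ω) (I : Set τ) {A : Set Ω}
    (hA : MeasurableSet[⨆ s ∈ I, MeasurableSpace.comap (W s) inferInstance] A) :
    ∃ A', MeasurableSet[⨆ s ∈ I, MeasurableSpace.comap (W' s) inferInstance] A' ∧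
      A ∩ E = A' ∩ E := by
  have htrace : (⨆ s ∈ I, MeasurableSpace.comap (W s) inferInstance).comap ((↑) : E → Ω) =
      (⨆ s ∈ I, MeasurableSpace.comap (W' s) inferInstance).comap ((↑) : E → Ω) := by
    simp only [MeasurableSpace.comap_iSup, MeasurableSpace.comap_comp]
    congr! 4 with s
    ext ω
    exact hWW' s ω ω.2
  obtain ⟨A', hA', hAA'⟩ : MeasurableSet[(⨆ s ∈ I, MeasurableSpace.comap (W' s)
      inferInstance).comap ((↑) : E → Ω)] (((↑) : E → Ω) ⁻¹' A) := htrace ▸ ⟨A, hA, rfl⟩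
  refine ⟨A', hA', ?_⟩
  rw [Set.inter_comm, Set.inter_comm A', Subtype.preimage_coe_eq_preimage_coe_iff.1 hAA']

end NaturalFiltration

theorem stmt_19_general {Ω K : Type*} [m0 : MeasurableSpace Ω]
    [MeasurableSpace K] [MeasurableSingletonClass K]
    (μ : Measure Ω) [IsProbabilityMeasure μ]
    (X : Fin 2 → NNReal → Ω → K) (Y : Fin 2 → NNReal → Ω → ℝ)
    (π : Fin 2 → NNReal → Ω → K → ℝ) (ξ : Ω → Fin 2)
    (hX : ∀ i t, Measurable (X i t)) (hY : ∀ i t, Measurable (Y i t))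
    (hπ : ∀ i t, Measurable (π i t)) (hξ : Measurable ξ)
    -- `ξ` is independent of the pair of the two processes:
    (hindepξ : IndepFun ξ
      (fun ω => ((fun t : NNReal => (X 0 t ω, Y 0 t ω, π 0 t ω)),
                 (fun t : NNReal => (X 1 t ω, Y 1 t ω, π 1 t ω)))) μ)
    -- conditional-law property for each component process:
    (hcond : ∀ (i : Fin 2) (t : NNReal) (k : K),
      (fun ω => π i t ω k) =ᵐ[μ]
        μ[Set.indicator {ω | X i t ω = k} (fun _ => (1 : ℝ)) |
          ⨆ s ∈ Set.Iic t,
            MeasurableSpace.comap (fun ω => (Y i s ω, π i s ω)) inferInstance]) :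
    ∀ (t : NNReal) (k : K),
      (fun ω => π (ξ ω) t ω k) =ᵐ[μ]
        μ[Set.indicator {ω | X (ξ ω) t ω = k} (fun _ => (1 : ℝ)) |
          ⨆ s ∈ Set.Iic t,
            MeasurableSpace.comap (fun ω => (Y (ξ ω) s ω, π (ξ ω) s ω)) inferInstance] := by
  intro t k
  set Φ : Fin 2 → Ω → NNReal → K × ℝ × (K → ℝ) := fun i ω s => (X i s ω, Y i s ω, π i s ω)
  have hΦ : ∀ i, Measurable[.comap (fun ω => (Φ 0 ω, Φ 1 ω)) inferInstance] (Φ i) :=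
    Fin.forall_fin_two.2
      ⟨measurable_fst.comp (comap_measurable _), measurable_snd.comp (comap_measurable _)⟩
  have hYπ : ∀ i s, Measurable[.comap (fun ω => (Φ 0 ω, Φ 1 ω)) inferInstance]
      fun ω => (Y i s ω, π i s ω) :=
    fun i s => (measurable_pi_apply s).snd.comp (hΦ i)
  refine ae_eq_condExp_select hξ (Measurable.comap_le (by fun_prop))
    (fun i => iSup₂_le fun s _ => (hYπ i s).comap_le)
    (iSup₂_le fun s _ => (measurable_select hξ fun i => (hY i s).prodMk (hπ i s)).comap_le)
    hindepξ (fun i A hA => exists_inter_eq_of_measurableSet_iSup_comap ?_ _ hA)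
    (fun i => ((measurable_pi_apply k).comp (measurable_pi_apply t).snd.snd).comp (hΦ i))
    (fun i => measurable_const.indicator ?_)
    (fun i => (integrable_const 1).indicator (hX i t (measurableSet_singleton k)))
    (fun i => hcond i t k) ?_
  · rintro s ω rfl
    rfl
  · exact (measurable_pi_apply t).fst.comp (hΦ i) (measurableSet_singleton k)
  · refine Measurable.aestronglyMeasurable ?_
    exact (measurable_pi_apply k).comp
      (measurable_snd.comp (measurable_iSup₂_comap Set.self_mem_Iic))

/-- mixing two independent pairs `(Z¹,π¹)`, `(Z²,π²)` by an independent
Bernoulli variable `ξ` preserves the conditional-law property: if for each `i` and `t`,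
`π^i_t(k) = ℙ(X^i_t = k | ℱ^{(Y^i,π^i)}_t)`, then the process `(Z,π)` equal to `(Z^i,π^i)`
on `{ξ = i}` satisfies `π_t(k) = ℙ(X_t = k | ℱ^{(Y,π)}_t)`. -/
theorem stmt_19 {Ω K : Type*} [m0 : MeasurableSpace Ω]
    [Fintype K] [MeasurableSpace K] [MeasurableSingletonClass K]
    (μ : Measure Ω) [IsProbabilityMeasure μ]
    (lam : ℝ) (hlam : lam ∈ Set.Icc (0 : ℝ) 1)
    (X : Fin 2 → NNReal → Ω → K) (Y : Fin 2 → NNReal → Ω → ℝ)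
    (π : Fin 2 → NNReal → Ω → K → ℝ) (ξ : Ω → Fin 2)
    (hX : ∀ i t, Measurable (X i t)) (hY : ∀ i t, Measurable (Y i t))
    (hπ : ∀ i t, Measurable (π i t)) (hξ : Measurable ξ)
    (hlaw0 : μ {ω | ξ ω = 0} = ENNReal.ofReal lam)
    (hlaw1 : μ {ω | ξ ω = 1} = ENNReal.ofReal (1 - lam))
    -- the two pairs of processes are independent of each other:
    (hindep12 : IndepFun
      (fun ω => fun t : NNReal => (X 0 t ω, Y 0 t ω, π 0 t ω))
      (fun ω => fun t : NNReal => (X 1 t ω, Y 1 t ω, π 1 t ω)) μ)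
    -- `ξ` is independent of the pair of the two processes:
    (hindepξ : IndepFun ξ
      (fun ω => ((fun t : NNReal => (X 0 t ω, Y 0 t ω, π 0 t ω)),
                 (fun t : NNReal => (X 1 t ω, Y 1 t ω, π 1 t ω)))) μ)
    -- conditional-law property for each component process:
    (hcond : ∀ (i : Fin 2) (t : NNReal) (k : K),
      (fun ω => π i t ω k) =ᵐ[μ]
        μ[Set.indicator {ω | X i t ω = k} (fun _ => (1 : ℝ)) |
          ⨆ s ∈ Set.Iic t,
            MeasurableSpace.comap (fun ω => (Y i s ω, π i s ω)) inferInstance]) :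
    ∀ (t : NNReal) (k : K),
      (fun ω => π (ξ ω) t ω k) =ᵐ[μ]
        μ[Set.indicator {ω | X (ξ ω) t ω = k} (fun _ => (1 : ℝ)) |
          ⨆ s ∈ Set.Iic t,
            MeasurableSpace.comap (fun ω => (Y (ξ ω) s ω, π (ξ ω) s ω)) inferInstance] :=
  stmt_19_general (m0 := m0) μ X Y π ξ hX hY hπ hξ hindepξ hcond
end
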